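/- arXiv:1001.3463 — 2 statements merged into one kernel-verified Lean document; each statement's English description precedes it below -/
import Mathlib

section
/- Let (X,d) be a metric space, μ a Borel measure on X, f:X→[0,∞) μ-measurable, x∈X and R>0. Let α∈(0,1), set c := 4√π · α^{−1}(1−α)^{−1/2} and δ := α²(1−α)/(144π). Assume: (i) r ↦ V(x,r) is continuous and positive on (0,R]; (ii) V(x,r)/r² → π as r→0⁺; and (iii) for every r∈(0,R], V(x,r)^{1/2} ≤ c·( D⁺V(x,·)(r) + ∫_{B(x,r)} f dμ ). Then at least one of the following holds: (1) sup_{r∈(0,R]} r^{−1} ∫_{B(x,r)} f dμ ≥ δ; (2) inf_{r∈(0,R]} V(x,r)/r² > δ. (This is the m=2 case of the paper's Lemma 2.1 with the explicit choice δ = α²(1−α)/(144π).) -/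
/-!
Suppose the first alternative fails, so `∫_{B(x,r)} f < δ r` on `(0, R]`. Since
`9 δ c² = 1`, wherever `V(x,r) > δ r²` the Sobolev inequality gives
`3 δ r ≤ D⁺V(x,·)(r) + ∫_{B(x,r)} f`, hence `D⁺V(x,·)(r) > 2 δ r`: the graph of
`V(x,·)` cannot cross the parabola `δ r²` from above. As `V(x,r)/r² → π > δ`, it starts
above it, so `V(x,r) > δ r²` on all of `(0, R]`. The infimum of `V(x,r)/r²` is then `> δ`
by compactness away from `0` and the limit `π` at `0`.
-/

open MeasureTheory Filter Set Real Topology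

noncomputable def lowerRightDini (V : ℝ → ℝ) (r : ℝ) : ℝ :=
  liminf (fun s => (V (r + s) - V r) / s) (𝓝[>] 0)

/-- Monotonicity bounds the difference quotients below, without which `liminf` on `ℝ` would be
a junk value. -/
lemma MonotoneOn.eventually_lt_slope_of_lt_lowerRightDini {V : ℝ → ℝ} {a b r q : ℝ}
    (hV : MonotoneOn V (Icc a b)) (hr : r ∈ Ico a b) (hq : q < lowerRightDini V r) :
    ∀ᶠ z in 𝓝[>] r, q < slope V r z := by
  have hnonneg : ∀ᶠ s in 𝓝[>] (0 : ℝ), 0 ≤ (V (r + s) - V r) / s := by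
    filter_upwards [Ioo_mem_nhdsGT (sub_pos.2 hr.2)] with s hs
    have hrs : V r ≤ V (r + s) :=
      hV ⟨hr.1, hr.2.le⟩ ⟨by linarith [hr.1, hs.1], by linarith [hs.2]⟩ (by linarith [hs.1])
    exact div_nonneg (sub_nonneg.2 hrs) hs.1.le
  have hlt : ∀ᶠ s in 𝓝[>] (0 : ℝ), q < (V (r + s) - V r) / s :=
    eventually_lt_of_lt_liminf hq ⟨0, hnonneg⟩
  have hmap : 𝓝[>] r = map (r + ·) (𝓝[>] 0) := by simp
  rw [hmap, eventually_map]
  filter_upwards [hlt] with s hs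
  rwa [slope_def_field, add_sub_cancel_left]

lemma MonotoneOn.mul_sq_lt_of_lt_lowerRightDini_Icc {V : ℝ → ℝ} {a b δ : ℝ}
    (hVm : MonotoneOn V (Icc a b)) (hVc : ContinuousOn V (Icc a b)) (ha : δ * a ^ 2 < V a)
    (hder : ∀ r ∈ Ico a b, δ * r ^ 2 < V r → 2 * δ * r < lowerRightDini V r) :
    ∀ r ∈ Icc a b, δ * r ^ 2 < V r := by
  set ε := V a - δ * a ^ 2
  have hε : 0 < ε := sub_pos.2 ha
  -- the margin `ε` in the fence `δ r² + ε` is what makes the conclusion strict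
  have hfence := image_le_of_liminf_slope_right_lt_deriv_boundary (f := fun r => -V r)
    (f' := fun r => -lowerRightDini V r) (B := fun r => -(δ * r ^ 2 + ε))
    (B' := fun r => -(2 * δ * r)) hVc.neg
    (fun r hr q hq => by
      refine ((hVm.eventually_lt_slope_of_lt_lowerRightDini hr
        (neg_lt.1 hq)).mono fun z hz => ?_).frequently
      rw [slope_neg]
      linarith)
    (by linarith)
    (fun r => by
      simpa [mul_comm, mul_left_comm] using
        (((hasDerivAt_pow 2 r).const_mul δ).add_const ε).fun_neg)
    (fun r hr hVr => neg_lt_neg (hder r hr (by linarith)))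
  intro r hr
  linarith [hfence hr]

lemma MonotoneOn.mul_sq_lt_of_lt_lowerRightDini_Ioc {V : ℝ → ℝ} {R δ : ℝ}
    (hVm : MonotoneOn V (Ioc 0 R)) (hVc : ContinuousOn V (Ioc 0 R))
    (h0 : ∃ᶠ r in 𝓝[>] 0, δ * r ^ 2 < V r)
    (hder : ∀ r ∈ Ioc 0 R, δ * r ^ 2 < V r → 2 * δ * r < lowerRightDini V r) :
    ∀ r ∈ Ioc 0 R, δ * r ^ 2 < V r := by
  intro r hr
  obtain ⟨a, hVa, ha⟩ := (h0.and_eventually (Ioc_mem_nhdsGT hr.1)).exists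
  have hsub : Icc a r ⊆ Ioc 0 R := Icc_subset_Ioc ha.1 hr.2
  exact (hVm.mono hsub).mul_sq_lt_of_lt_lowerRightDini_Icc (hVc.mono hsub) hVa
    (fun s hs => hder s (hsub (Ico_subset_Icc_self hs))) r ⟨ha.2, le_rfl⟩

lemma lt_csInf_image_Ioc_of_tendsto {g : ℝ → ℝ} {R δ ℓ : ℝ} (hR : 0 < R)
    (hg : ContinuousOn g (Ioc 0 R)) (hδg : ∀ r ∈ Ioc 0 R, δ < g r)
    (hlim : Tendsto g (𝓝[>] 0) (𝓝 ℓ)) (hδℓ : δ < ℓ) : δ < sInf (g '' Ioc 0 R) := by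
  obtain ⟨δ', hδδ', hδ'ℓ⟩ := exists_between hδℓ
  obtain ⟨η', hη', hnear⟩ :=
    mem_nhdsGT_iff_exists_Ioo_subset.1 (hlim.eventually (lt_mem_nhds hδ'ℓ))
  set η := min (η' / 2) R
  have hη : 0 < η := lt_min (half_pos hη') hR
  have hsub : Icc η R ⊆ Ioc 0 R := Icc_subset_Ioc hη le_rfl
  obtain ⟨r₀, hr₀, hmin⟩ :=
    isCompact_Icc.exists_isMinOn (nonempty_Icc.2 (min_le_right _ _)) (hg.mono hsub)
  refine (lt_min hδδ' (hδg r₀ (hsub hr₀))).trans_le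
    (le_csInf ((nonempty_Ioc.2 hR).image g) ?_)
  rintro _ ⟨r, hr, rfl⟩
  rcases le_or_gt r η with hrη | hηr
  · have hrη' : r < η' := hrη.trans_lt ((min_le_left _ _).trans_lt (half_lt_self hη'))
    exact (min_le_left _ _).trans (hnear ⟨hr.1, hrη'⟩).le
  · exact (min_le_right _ _).trans (hmin ⟨hηr.le, hr.2⟩)

lemma three_mul_le_of_sqrt_le {δ c r V A : ℝ} (hc : 0 < c) (hδc : 9 * δ * c ^ 2 = 1)
    (hr : 0 ≤ r) (hV : δ * r ^ 2 ≤ V) (hVA : √V ≤ c * A) : 3 * δ * r ≤ A := by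
  have hA : 0 ≤ A := nonneg_of_mul_nonneg_right ((sqrt_nonneg V).trans hVA) hc
  have hδ : 0 < δ := by
    have : 0 < 9 * δ * c ^ 2 := by rw [hδc]; exact one_pos
    nlinarith [sq_nonneg c]
  have hsq : (3 * δ * r) ^ 2 ≤ A ^ 2 :=
    calc (3 * δ * r) ^ 2 = 9 * δ * (δ * r ^ 2) := by ring
      _ ≤ 9 * δ * √V ^ 2 := by
        rw [sq_sqrt ((by positivity : 0 ≤ δ * r ^ 2).trans hV)]; gcongr
      _ ≤ 9 * δ * (c * A) ^ 2 := by gcongr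
      _ = A ^ 2 := by linear_combination A ^ 2 * hδc
  exact (pow_le_pow_iff_left₀ (by positivity) hA two_ne_zero).1 hsq

lemma nine_mul_mul_sq_eq_one {α : ℝ} (hα : α ∈ Ioo 0 1) :
    9 * (α ^ 2 * (1 - α) / (144 * π)) *
      (4 * √π * α⁻¹ * (1 - α) ^ (-(1 / 2 : ℝ))) ^ 2 = 1 := by
  have hα0 : α ≠ 0 := hα.1.ne'
  have h1α : 0 < 1 - α := sub_pos.2 hα.2
  rw [rpow_neg h1α.le, ← sqrt_eq_rpow]
  field_simp
  rw [sq_sqrt pi_pos.le, sq_sqrt h1α.le]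
  ring

lemma monotoneOn_measure_ball_toReal {X : Type*} [PseudoMetricSpace X] [MeasurableSpace X]
    (μ : Measure X) (x : X) {R : ℝ} (hR : μ (Metric.ball x R) ≠ ⊤) :
    MonotoneOn (fun r => (μ (Metric.ball x r)).toReal) (Iic R) := fun _ _ _ hs hrs =>
  ENNReal.toReal_mono (ne_top_of_le_ne_top hR (measure_mono (Metric.ball_subset_ball hs)))
    (measure_mono (Metric.ball_subset_ball hrs))

theorem maximal_function_or_volume_ratio_surface_general
    {X : Type*} [MetricSpace X] [MeasurableSpace X]
    (μ : Measure X)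
    (f : X → ℝ)
    (x : X) (R : ℝ) (hR : 0 < R)
    (α : ℝ) (hα : α ∈ Set.Ioo (0 : ℝ) 1)
    (hVcont : ContinuousOn (fun r : ℝ => (μ (Metric.ball x r)).toReal) (Set.Ioc 0 R))
    (hVpos : ∀ r ∈ Set.Ioc (0 : ℝ) R, 0 < (μ (Metric.ball x r)).toReal)
    (hVlim : Tendsto (fun r : ℝ => (μ (Metric.ball x r)).toReal / r ^ 2)
      (nhdsWithin 0 (Set.Ioi 0)) (nhds π))
    (hSob : ∀ r ∈ Set.Ioc (0 : ℝ) R,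
      (μ (Metric.ball x r)).toReal ^ ((1 : ℝ) / 2) ≤
        (4 * Real.sqrt π * α⁻¹ * (1 - α) ^ (-(1 / 2 : ℝ))) *
          (Filter.liminf
            (fun s : ℝ =>
              ((μ (Metric.ball x (r + s))).toReal - (μ (Metric.ball x r)).toReal) / s)
            (nhdsWithin 0 (Set.Ioi 0))
          + ∫ y in Metric.ball x r, f y ∂μ)) :
    (∃ r ∈ Set.Ioc (0 : ℝ) R,
        α ^ 2 * (1 - α) / (144 * π) ≤ r⁻¹ * ∫ y in Metric.ball x r, f y ∂μ) ∨
      α ^ 2 * (1 - α) / (144 * π) <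
        sInf {v : ℝ | ∃ r ∈ Set.Ioc (0 : ℝ) R,
          v = (μ (Metric.ball x r)).toReal / r ^ 2} := by
  set V : ℝ → ℝ := fun r => (μ (Metric.ball x r)).toReal
  set δ := α ^ 2 * (1 - α) / (144 * π)
  refine or_iff_not_imp_left.2 fun hsmall => ?_
  push Not at hsmall
  have hδπ : δ < π := by
    have : α ^ 2 * (1 - α) < 1 := by nlinarith [hα.1, hα.2]
    rw [div_lt_iff₀ (by positivity)]
    nlinarith [pi_gt_three]
  have hc : 0 < 4 * √π * α⁻¹ * (1 - α) ^ (-(1 / 2 : ℝ)) := by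
    have hα0 := hα.1
    have h1α := rpow_pos_of_pos (sub_pos.2 hα.2) (-(1 / 2 : ℝ))
    positivity
  have hder : ∀ r ∈ Ioc 0 R, δ * r ^ 2 < V r → 2 * δ * r < lowerRightDini V r := by
    intro r hr hVr
    have h3 : 3 * δ * r ≤ lowerRightDini V r + ∫ y in Metric.ball x r, f y ∂μ :=
      three_mul_le_of_sqrt_le hc (nine_mul_mul_sq_eq_one hα) hr.1.le hVr.le
      ((sqrt_eq_rpow _).trans_le (hSob r hr))
    have hI := (inv_mul_lt_iff₀ hr.1).1 (hsmall r hr)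
    linarith
  have hnear : ∀ᶠ r in 𝓝[>] 0, δ * r ^ 2 < V r := by
    filter_upwards [hVlim.eventually (lt_mem_nhds hδπ), self_mem_nhdsWithin] with r hr hr0
    rwa [lt_div_iff₀ (pow_pos hr0 2)] at hr
  have hVmono : MonotoneOn V (Ioc 0 R) :=
    (monotoneOn_measure_ball_toReal μ x
      (ENNReal.toReal_pos_iff.1 (hVpos R ⟨hR, le_rfl⟩)).2.ne).mono Ioc_subset_Iic_self
  have hVsq := hVmono.mul_sq_lt_of_lt_lowerRightDini_Ioc hVcont hnear.frequently hder
  have hinf := lt_csInf_image_Ioc_of_tendsto (g := fun r => V r / r ^ 2) hR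
    (hVcont.div (continuousOn_pow 2) fun r hr => pow_ne_zero 2 hr.1.ne')
    (fun r hr => (lt_div_iff₀ (pow_pos hr.1 2)).2 (hVsq r hr)) hVlim hδπ
  convert hinf using 2
  ext v
  exact exists_congr fun _ => and_congr_right fun _ => eq_comm

/-- **Lemma 2.1 for surfaces (`m = 2`), with explicit constants.** Let `α ∈ (0,1)`,
`c = 4√π α⁻¹ (1-α)^(-1/2)` and `δ = α²(1-α)/(144π)`. If `V(x,r) = μ(B(x,r))` is
continuous and positive on `(0,R]`, `V(x,r)/r² → π` as `r → 0⁺`, and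
`V(x,r)^(1/2) ≤ c (D⁺V(x,·)(r) + ∫_{B(x,r)} f dμ)` for all `r ∈ (0,R]`, then either
`sup_{r ∈ (0,R]} r⁻¹ ∫_{B(x,r)} f dμ ≥ δ` (there exists `r ∈ (0,R]` where the quantity
is at least `δ`), or `inf_{r ∈ (0,R]} V(x,r)/r² > δ`. -/
theorem maximal_function_or_volume_ratio_surface
    {X : Type*} [MetricSpace X] [MeasurableSpace X] [BorelSpace X]
    (μ : Measure X)
    (f : X → ℝ) (hf0 : ∀ x, 0 ≤ f x) (hfmeas : Measurable f)
    (x : X) (R : ℝ) (hR : 0 < R)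
    (α : ℝ) (hα : α ∈ Set.Ioo (0 : ℝ) 1)
    (hVcont : ContinuousOn (fun r : ℝ => (μ (Metric.ball x r)).toReal) (Set.Ioc 0 R))
    (hVpos : ∀ r ∈ Set.Ioc (0 : ℝ) R, 0 < (μ (Metric.ball x r)).toReal)
    (hVlim : Tendsto (fun r : ℝ => (μ (Metric.ball x r)).toReal / r ^ 2)
      (nhdsWithin 0 (Set.Ioi 0)) (nhds π))
    (hSob : ∀ r ∈ Set.Ioc (0 : ℝ) R,
      (μ (Metric.ball x r)).toReal ^ ((1 : ℝ) / 2) ≤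
        (4 * Real.sqrt π * α⁻¹ * (1 - α) ^ (-(1 / 2 : ℝ))) *
          (Filter.liminf
            (fun s : ℝ =>
              ((μ (Metric.ball x (r + s))).toReal - (μ (Metric.ball x r)).toReal) / s)
            (nhdsWithin 0 (Set.Ioi 0))
          + ∫ y in Metric.ball x r, f y ∂μ)) :
    (∃ r ∈ Set.Ioc (0 : ℝ) R,
        α ^ 2 * (1 - α) / (144 * π) ≤ r⁻¹ * ∫ y in Metric.ball x r, f y ∂μ) ∨
      α ^ 2 * (1 - α) / (144 * π) <
        sInf {v : ℝ | ∃ r ∈ Set.Ioc (0 : ℝ) R,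
          v = (μ (Metric.ball x r)).toReal / r ^ 2} :=
  maximal_function_or_volume_ratio_surface_general μ f x R hR α hα hVcont hVpos hVlim hSob
end

section
/- Let (X,d) be a compact connected metric space in which every pair of points x,y is joined by a unit-speed geodesic (a map γ:[0,d(x,y)]→X with γ(0)=x, γ(d(x,y))=y and d(γ(s),γ(t))=|s−t| for all s,t), let μ be a finite Borel measure on X, and let f:X→[0,∞) be μ-integrable. Let α ∈ (0,1), set c := 4√π·α^{−1}(1−α)^{−1/2} and δ := α²(1−α)/(144π). Assume that for every x∈X: (i) r ↦ V(x,r) is continuous and positive on (0,∞); (ii) V(x,r)/r² → π as r→0⁺; and (iii) for every r>0, V(x,r)^{1/2} ≤ c·( D⁺V(x,·)(r) + ∫_{B(x,r)} f dμ ). Then diam(X) ≤ (576π / (α²(1−α)))·∫_X f dμ. In particular, taking α = 2/3, diam(X) ≤ 3888π·∫_X f dμ. (This is the m=2 case of the paper's main theorem with its explicit constants C(2,α) = 576π/(α²(1−α)) and C(2,2/3) = 3888π, in metric-measure form with f = |H|.) -/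
open MeasureTheory Filter Set Real Topology Metric

/-!
Fix `x` and compare `V(r) = μ(B(x,r))` with the parabola `k r²`, `k = 1/(16c²)`. For small `r`
the volume lies above it (the density is `π > k`), for large `r` below it (`μ` is finite). At the
last radius `r` where `V(r) ≥ k r²`, the Dini derivative of `V` is at most `2kr`, and the Sobolev
inequality turns `√(k r²) ≤ c (2kr + ∫_{B(x,r)} f)` into `r ≤ 8c² ∫_{B(x,r)} f`.

Along a geodesic `γ` of length `L` the intervals `(s - r_s, s + r_s)` attached to the points
`γ(s)` cover `[0, L]`. A finite subcover splits into two families of pairwise disjoint intervals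
of total length at least `L`; since `γ` is an isometry, the corresponding balls are disjoint too,
so each family has `∑ r_s ≤ 8c² ∫ f`. Hence `L ≤ 32c² ∫ f = 512π/(α²(1-α)) ∫ f`.
-/

theorem exists_separated_pair_of_Icc_subset_iUnion_Ioo (r : ℝ → ℝ) (T : Finset ℝ) {a b : ℝ}
    (hab : a ≤ b) (hcov : Icc a b ⊆ ⋃ s ∈ T, Ioo (s - r s) (s + r s)) :
    ∃ A ⊆ T, ∃ B ⊆ T, (A : Set ℝ).Pairwise (fun s t => r s + r t ≤ |s - t|) ∧
      (B : Set ℝ).Pairwise (fun s t => r s + r t ≤ |s - t|) ∧ (∀ t ∈ B, a ≤ t - r t) ∧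
      b - a ≤ 2 * ∑ s ∈ A, r s + 2 * ∑ s ∈ B, r s := by
  classical
  induction T using Finset.strongInduction generalizing a with
  | H T ih =>
  obtain ⟨s₀, hs₀T, hs₀a⟩ := mem_iUnion₂.mp (hcov ⟨le_rfl, hab⟩)
  obtain ⟨c, hcT₀, hcmax⟩ := (T.filter fun s => a ∈ Ioo (s - r s) (s + r s)).exists_max_image
    (fun s => s + r s) ⟨s₀, Finset.mem_filter.mpr ⟨hs₀T, hs₀a⟩⟩
  obtain ⟨hcT, hca⟩ := Finset.mem_filter.mp hcT₀
  by_cases hb : b ≤ c + r c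
  · refine ⟨{c}, by simpa, ∅, by simp, by simp, by simp, by simp, ?_⟩
    simp only [Finset.sum_singleton, Finset.sum_empty]
    linarith [hca.1]
  push Not at hb
  -- Recurse on the intervals reaching beyond the one through `a` that reaches furthest.
  set T' := T.filter fun t => c + r c < t + r t
  have hcov' : Icc (c + r c) b ⊆ ⋃ s ∈ T', Ioo (s - r s) (s + r s) := by
    intro x hx
    obtain ⟨s, hsT, hsx⟩ := mem_iUnion₂.mp (hcov ⟨hca.2.le.trans hx.1, hx.2⟩)
    exact mem_biUnion (Finset.mem_filter.mpr ⟨hsT, hx.1.trans_lt hsx.2⟩) hsx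
  obtain ⟨A, hAT', B, hBT', hA, hB, hBleft, hlen⟩ :=
    ih T' (Finset.filter_ssubset.mpr ⟨c, hcT, lt_irrefl _⟩) hb.le hcov'
  have hcB : c ∉ B := fun h => lt_irrefl _ (Finset.mem_filter.mp (hBT' h)).2
  have hAleft : ∀ t ∈ A, a ≤ t - r t := by
    intro t ht
    obtain ⟨htT, hct⟩ := Finset.mem_filter.mp (hAT' ht)
    by_contra! h
    exact (hcmax t (Finset.mem_filter.mpr ⟨htT, h, hca.2.trans hct⟩)).not_gt hct
  refine ⟨insert c B, Finset.insert_subset hcT (hBT'.trans (Finset.filter_subset _ _)),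
    A, hAT'.trans (Finset.filter_subset _ _), ?_, hA, hAleft, ?_⟩
  · rw [Finset.coe_insert, Set.pairwise_insert]
    refine ⟨hB, fun t ht _ => ?_⟩
    have := hBleft t ht
    rw [abs_sub_comm c]
    exact ⟨le_abs.mpr (Or.inl (by linarith)), le_abs.mpr (Or.inl (by linarith))⟩
  · rw [Finset.sum_insert hcB]
    linarith [hca.1]

theorem exists_last_nonneg_of_continuousOn {F : ℝ → ℝ} {a b : ℝ} (hab : a ≤ b)
    (hF : ContinuousOn F (Icc a b)) (ha : 0 ≤ F a) (hb : F b < 0) :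
    ∃ c ∈ Ico a b, 0 ≤ F c ∧ ∀ x ∈ Ioc c b, F x < 0 := by
  have hK : IsCompact (Icc a b ∩ F ⁻¹' Ici 0) :=
    isCompact_Icc.of_isClosed_subset (hF.preimage_isClosed_of_isClosed isClosed_Icc isClosed_Ici)
      inter_subset_left
  obtain ⟨c, ⟨hcab, hc⟩, hcmax⟩ := hK.exists_isGreatest ⟨a, ⟨le_rfl, hab⟩, ha⟩
  refine ⟨c, ⟨hcab.1, hcab.2.lt_of_ne fun h => ?_⟩, hc, fun x hx => ?_⟩
  · exact (h ▸ hb).not_ge hc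
  · by_contra! h
    exact hx.1.not_ge (hcmax ⟨⟨hcab.1.trans hx.1.le, hx.2⟩, h⟩)

theorem exists_pos_mul_sq_le_and_eventually_le {V : ℝ → ℝ} {k : ℝ} (hk : 0 < k) (hV : ContinuousOn V (Ioi 0))
    (hbdd : BddAbove (range V)) (hsmall : ∀ᶠ r in 𝓝[>] 0, k * r ^ 2 < V r) :
    ∃ r > 0, k * r ^ 2 ≤ V r ∧ ∀ᶠ s in 𝓝[>] 0, V (r + s) ≤ k * (r + s) ^ 2 := by
  obtain ⟨r₀, hr₀, hr₀0⟩ := (hsmall.and self_mem_nhdsWithin).exists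
  obtain ⟨M, hM⟩ := hbdd
  obtain ⟨r₁, hr₁M, hr₀₁⟩ :=
    ((((tendsto_pow_atTop two_ne_zero).const_mul_atTop hk).eventually_gt_atTop M).and
      (eventually_gt_atTop r₀)).exists
  obtain ⟨r, hr, hrV, hlast⟩ := exists_last_nonneg_of_continuousOn (F := fun ρ => V ρ - k * ρ ^ 2)
    hr₀₁.le ((hV.mono fun ρ hρ => lt_of_lt_of_le hr₀0 hρ.1).sub (by fun_prop))
    (by linarith) (by linarith [hM (mem_range_self r₁)])
  refine ⟨r, lt_of_lt_of_le hr₀0 hr.1, by linarith, ?_⟩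
  filter_upwards [Ioo_mem_nhdsGT (sub_pos.mpr hr.2)] with s hs
  linarith [hlast (r + s) ⟨by linarith [hs.1], by linarith [hs.2]⟩]

theorem liminf_slope_le_of_le_of_hasDerivAt {V g : ℝ → ℝ} {r g' : ℝ} (hg : HasDerivAt g g' r)
    (hr : g r ≤ V r) (hle : ∀ᶠ s in 𝓝[>] 0, V (r + s) ≤ g (r + s))
    (hbdd : IsBoundedUnder (· ≥ ·) (𝓝[>] 0) fun s => (V (r + s) - V r) / s) :
    liminf (fun s => (V (r + s) - V r) / s) (𝓝[>] 0) ≤ g' := by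
  have hslope := hg.tendsto_slope_zero_right
  calc liminf (fun s => (V (r + s) - V r) / s) (𝓝[>] 0)
      ≤ liminf (fun s => s⁻¹ • (g (r + s) - g r)) (𝓝[>] 0) := by
        refine liminf_le_liminf ?_ hbdd hslope.isCoboundedUnder_ge
        filter_upwards [hle, self_mem_nhdsWithin] with s hs (hs0 : 0 < s)
        rw [smul_eq_mul, div_eq_inv_mul]
        gcongr
    _ = g' := hslope.liminf_eq

theorem exists_radius_le_of_sqrt_le_liminf_slope_add {V I : ℝ → ℝ} {c : ℝ} (hc : 0 < c)
    (hVmono : Monotone V) (hVbdd : BddAbove (range V)) (hVcont : ContinuousOn V (Ioi 0))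
    (hsmall : ∀ᶠ r in 𝓝[>] 0, (16 * c ^ 2)⁻¹ * r ^ 2 < V r)
    (hSob : ∀ r > 0, V r ^ ((1 : ℝ) / 2) ≤
      c * (liminf (fun s => (V (r + s) - V r) / s) (𝓝[>] 0) + I r)) :
    ∃ r > 0, r ≤ 8 * c ^ 2 * I r := by
  set k := (16 * c ^ 2)⁻¹
  obtain ⟨r, hr, hrV, hle⟩ := exists_pos_mul_sq_le_and_eventually_le (by positivity) hVcont hVbdd hsmall
  have hbdd : IsBoundedUnder (· ≥ ·) (𝓝[>] 0) fun s => (V (r + s) - V r) / s := by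
    refine ⟨0, eventually_map.mpr ?_⟩
    filter_upwards [self_mem_nhdsWithin] with s (hs : 0 < s)
    exact div_nonneg (sub_nonneg.mpr (hVmono (by linarith))) hs.le
  have hderiv : HasDerivAt (fun ρ => k * ρ ^ 2) (k * (2 * r)) r := by
    simpa using (hasDerivAt_pow 2 r).const_mul k
  have hD := liminf_slope_le_of_le_of_hasDerivAt hderiv hrV hle hbdd
  -- `k` is chosen so that `√(k r²) = r / (4c)` beats the slope term `c · 2kr = r / (8c)`.
  have hk : c ^ 2 * k = 1 / 16 := by simp only [k]; field_simp
  have hsqrt : r / (4 * c) ≤ √(V r) := by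
    refine (Real.le_sqrt' (by positivity)).mpr (le_of_eq_of_le ?_ hrV)
    field_simp
    linear_combination -16 * hk
  have h := hsqrt.trans ((Real.sqrt_eq_rpow _).trans_le (hSob r hr))
  refine ⟨r, hr, ?_⟩
  have : r ≤ c * (k * (2 * r) + I r) * (4 * c) :=
    (div_le_iff₀ (by positivity)).mp (h.trans (by gcongr))
  linear_combination 2 * this + 16 * r * hk

theorem exists_radius_le_setIntegral_ball {X : Type*} [MetricSpace X] [MeasurableSpace X]
    (μ : Measure X) [IsFiniteMeasure μ] (f : X → ℝ) {c θ : ℝ} (hc : 0 < c)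
    (hcθ : (16 * c ^ 2)⁻¹ < θ) (x : X)
    (hVcont : ContinuousOn (fun r : ℝ => (μ (ball x r)).toReal) (Ioi 0))
    (hVlim : Tendsto (fun r : ℝ => (μ (ball x r)).toReal / r ^ 2) (𝓝[>] 0) (𝓝 θ))
    (hSob : ∀ r : ℝ, 0 < r → (μ (ball x r)).toReal ^ ((1 : ℝ) / 2) ≤
      c * (liminf (fun s : ℝ => ((μ (ball x (r + s))).toReal - (μ (ball x r)).toReal) / s)
        (𝓝[>] 0) + ∫ y in ball x r, f y ∂μ)) :
    ∃ r > 0, r ≤ 8 * c ^ 2 * ∫ y in ball x r, f y ∂μ := by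
  refine exists_radius_le_of_sqrt_le_liminf_slope_add (I := fun r => ∫ y in ball x r, f y ∂μ) hc
    (fun r₁ r₂ h => ENNReal.toReal_mono (measure_ne_top μ _) (measure_mono (ball_subset_ball h)))
    ⟨(μ univ).toReal, forall_mem_range.mpr fun r =>
      ENNReal.toReal_mono (measure_ne_top μ _) (measure_mono (subset_univ _))⟩
    hVcont ?_ hSob
  filter_upwards [hVlim.eventually (lt_mem_nhds hcθ), self_mem_nhdsWithin] with r hr (hr0 : 0 < r)
  exact (lt_div_iff₀ (by positivity)).mp hr

theorem sum_setIntegral_ball_le_integral {X ι : Type*} [MetricSpace X] [MeasurableSpace X]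
    [OpensMeasurableSpace X] {μ : Measure X} {f : X → ℝ} (hf0 : 0 ≤ f) (hf : Integrable f μ)
    {p : ι → X} {R : ι → ℝ} (S : Finset ι)
    (hS : (S : Set ι).Pairwise fun i j => R i + R j ≤ dist (p i) (p j)) :
    ∑ i ∈ S, ∫ y in ball (p i) (R i), f y ∂μ ≤ ∫ y, f y ∂μ := by
  rw [← integral_biUnion_finset S (fun i _ => measurableSet_ball)
    (fun i hi j hj hij => ball_disjoint_ball (hS hi hj hij)) (fun i _ => hf.integrableOn)]
  exact setIntegral_le_integral hf (ae_of_all _ hf0)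

theorem le_of_isometry_of_radius_le_setIntegral_ball {X : Type*} [MetricSpace X]
    [MeasurableSpace X] [OpensMeasurableSpace X] {μ : Measure X} {f : X → ℝ} (hf0 : 0 ≤ f)
    (hf : Integrable f μ) {γ : ℝ → X} {L K : ℝ} (hL : 0 ≤ L) (hK : 0 ≤ K)
    (hγ : ∀ s ∈ Icc 0 L, ∀ t ∈ Icc 0 L, dist (γ s) (γ t) = |s - t|) {R : ℝ → ℝ}
    (hR : ∀ s, 0 < R s) (hRK : ∀ s, R s ≤ K * ∫ y in ball (γ s) (R s), f y ∂μ) :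
    L ≤ 4 * K * ∫ y, f y ∂μ := by
  obtain ⟨T, hT, hcov⟩ := isCompact_Icc.elim_nhds_subcover (fun s => Ioo (s - R s) (s + R s))
    fun s _ => Ioo_mem_nhds (by linarith [hR s]) (by linarith [hR s])
  obtain ⟨A, hAT, B, hBT, hA, hB, -, hlen⟩ :=
    exists_separated_pair_of_Icc_subset_iUnion_Ioo R T hL hcov
  have hsum : ∀ S ⊆ T, (S : Set ℝ).Pairwise (fun s t => R s + R t ≤ |s - t|) →
      ∑ s ∈ S, R s ≤ K * ∫ y, f y ∂μ := by
    intro S hST hS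
    calc ∑ s ∈ S, R s ≤ ∑ s ∈ S, K * ∫ y in ball (γ s) (R s), f y ∂μ :=
          Finset.sum_le_sum fun s _ => hRK s
      _ = K * ∑ s ∈ S, ∫ y in ball (γ s) (R s), f y ∂μ := (Finset.mul_sum _ _ _).symm
      _ ≤ K * ∫ y, f y ∂μ := by
        refine mul_le_mul_of_nonneg_left (sum_setIntegral_ball_le_integral hf0 hf S ?_) hK
        intro s hs t ht hst
        rw [hγ s (hT s (hST hs)) t (hT t (hST ht))]
        exact hS hs ht hst
  linarith [hsum A hAT hA, hsum B hBT hB]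

theorem sq_four_mul_sqrt_pi_mul_inv_mul_rpow_neg_half {α : ℝ} (hα : α ≤ 1) :
    (4 * √π * α⁻¹ * (1 - α) ^ (-(1 / 2 : ℝ))) ^ 2 = 16 * π / (α ^ 2 * (1 - α)) := by
  have h1α : 0 ≤ 1 - α := sub_nonneg.mpr hα
  rw [Real.rpow_neg h1α, ← Real.sqrt_eq_rpow, mul_pow, mul_pow, mul_pow, inv_pow, inv_pow,
    Real.sq_sqrt pi_pos.le, Real.sq_sqrt h1α, div_eq_mul_inv, mul_inv]
  ring

theorem diameter_bound_surface_general
    {X : Type*} [MetricSpace X]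
    [MeasurableSpace X] [BorelSpace X]
    (μ : Measure X) [IsFiniteMeasure μ]
    (geodesic : ∀ x y : X, ∃ γ : ℝ → X, γ 0 = x ∧ γ (dist x y) = y ∧
      ∀ s ∈ Set.Icc (0 : ℝ) (dist x y), ∀ t ∈ Set.Icc (0 : ℝ) (dist x y),
        dist (γ s) (γ t) = |s - t|)
    (f : X → ℝ) (hf0 : ∀ x, 0 ≤ f x) (hfint : Integrable f μ)
    (α : ℝ) (hα : α ∈ Set.Ioo (0 : ℝ) 1)
    (hVcont : ∀ x : X,
      ContinuousOn (fun r : ℝ => (μ (Metric.ball x r)).toReal) (Set.Ioi 0))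
    (hVlim : ∀ x : X,
      Tendsto (fun r : ℝ => (μ (Metric.ball x r)).toReal / r ^ 2)
        (nhdsWithin 0 (Set.Ioi 0)) (nhds π))
    (hSob : ∀ x : X, ∀ r : ℝ, 0 < r →
      (μ (Metric.ball x r)).toReal ^ ((1 : ℝ) / 2) ≤
        (4 * Real.sqrt π * α⁻¹ * (1 - α) ^ (-(1 / 2 : ℝ))) *
          (Filter.liminf
            (fun s : ℝ =>
              ((μ (Metric.ball x (r + s))).toReal - (μ (Metric.ball x r)).toReal) / s)
            (nhdsWithin 0 (Set.Ioi 0))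
          + ∫ y in Metric.ball x r, f y ∂μ)) :
    Metric.diam (Set.univ : Set X) ≤ 576 * π / (α ^ 2 * (1 - α)) * ∫ x, f x ∂μ ∧
      (α = 2 / 3 → Metric.diam (Set.univ : Set X) ≤ 3888 * π * ∫ x, f x ∂μ) := by
  obtain ⟨hα0, hα1⟩ := hα
  set c := 4 * √π * α⁻¹ * (1 - α) ^ (-(1 / 2 : ℝ))
  have hc2 : c ^ 2 = 16 * π / (α ^ 2 * (1 - α)) :=
    sq_four_mul_sqrt_pi_mul_inv_mul_rpow_neg_half hα1.le
  have hc : 0 < c := by have := sub_pos.mpr hα1; positivity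
  have hcπ : (16 * c ^ 2)⁻¹ < π := by
    have hβ : α ^ 2 * (1 - α) < 1 := by nlinarith
    have : 1 < 16 * c ^ 2 := by
      rw [hc2, mul_div_assoc', lt_div_iff₀ (by have := sub_pos.mpr hα1; positivity)]
      nlinarith [pi_gt_three]
    linarith [inv_lt_one_of_one_lt₀ this, pi_gt_three]
  have hint : 0 ≤ ∫ x, f x ∂μ := integral_nonneg hf0
  have hdiam : diam (univ : Set X) ≤ 32 * c ^ 2 * ∫ x, f x ∂μ := by
    refine diam_le_of_forall_dist_le (by positivity) fun p _ q _ => ?_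
    obtain ⟨γ, -, -, hγ⟩ := geodesic p q
    choose R hR hRK using fun s =>
      exists_radius_le_setIntegral_ball μ f hc hcπ (γ s) (hVcont _) (hVlim _) (hSob _)
    linarith [le_of_isometry_of_radius_le_setIntegral_ball hf0 hfint dist_nonneg (by positivity)
      hγ hR hRK]
  have hmain : diam (univ : Set X) ≤ 576 * π / (α ^ 2 * (1 - α)) * ∫ x, f x ∂μ := by
    refine hdiam.trans (mul_le_mul_of_nonneg_right ?_ hint)
    rw [hc2, mul_div_assoc', ← mul_assoc]
    gcongr
    norm_num
  refine ⟨hmain, fun h => hmain.trans_eq ?_⟩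
  rw [h]
  ring

/-- **Main diameter estimate for surfaces (`m = 2`), with explicit constants.** Let
`(X,d)` be a compact connected geodesic metric space with a finite Borel measure `μ`,
`f : X → [0,∞)` integrable, `α ∈ (0,1)`, and set `c = 4√π α⁻¹ (1-α)^(-1/2)`. If for
every `x` the volume function `V(x,r) = μ(B(x,r))` is continuous and positive on
`(0,∞)`, satisfies `V(x,r)/r² → π` as `r → 0⁺`, and
`V(x,r)^(1/2) ≤ c (D⁺V(x,·)(r) + ∫_{B(x,r)} f dμ)` for all `r > 0`, then
`diam X ≤ (576π/(α²(1-α))) ∫_X f dμ`; in particular, for `α = 2/3`,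
`diam X ≤ 3888π ∫_X f dμ`. -/
theorem diameter_bound_surface
    {X : Type*} [MetricSpace X] [CompactSpace X] [ConnectedSpace X]
    [MeasurableSpace X] [BorelSpace X]
    (μ : Measure X) [IsFiniteMeasure μ]
    (geodesic : ∀ x y : X, ∃ γ : ℝ → X, γ 0 = x ∧ γ (dist x y) = y ∧
      ∀ s ∈ Set.Icc (0 : ℝ) (dist x y), ∀ t ∈ Set.Icc (0 : ℝ) (dist x y),
        dist (γ s) (γ t) = |s - t|)
    (f : X → ℝ) (hf0 : ∀ x, 0 ≤ f x) (hfint : Integrable f μ)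
    (α : ℝ) (hα : α ∈ Set.Ioo (0 : ℝ) 1)
    (hVcont : ∀ x : X,
      ContinuousOn (fun r : ℝ => (μ (Metric.ball x r)).toReal) (Set.Ioi 0))
    (hVpos : ∀ x : X, ∀ r : ℝ, 0 < r → 0 < (μ (Metric.ball x r)).toReal)
    (hVlim : ∀ x : X,
      Tendsto (fun r : ℝ => (μ (Metric.ball x r)).toReal / r ^ 2)
        (nhdsWithin 0 (Set.Ioi 0)) (nhds π))
    (hSob : ∀ x : X, ∀ r : ℝ, 0 < r →
      (μ (Metric.ball x r)).toReal ^ ((1 : ℝ) / 2) ≤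
        (4 * Real.sqrt π * α⁻¹ * (1 - α) ^ (-(1 / 2 : ℝ))) *
          (Filter.liminf
            (fun s : ℝ =>
              ((μ (Metric.ball x (r + s))).toReal - (μ (Metric.ball x r)).toReal) / s)
            (nhdsWithin 0 (Set.Ioi 0))
          + ∫ y in Metric.ball x r, f y ∂μ)) :
    Metric.diam (Set.univ : Set X) ≤ 576 * π / (α ^ 2 * (1 - α)) * ∫ x, f x ∂μ ∧
      (α = 2 / 3 → Metric.diam (Set.univ : Set X) ≤ 3888 * π * ∫ x, f x ∂μ) :=
  diameter_bound_surface_general μ geodesic f hf0 hfint α hα hVcont hVlim hSob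
end
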